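/- arXiv:1309.0557 — 9 statements merged into one kernel-verified Lean document; each statement's English description precedes it below -/
import Mathlib

section
/- Let d ≥ 1, let b be a real number with b > (d−1)/2, and let k be a positive integer. Let î(k) denote the lexicographically smallest partition of k into not more than d parts. Then 0 < (b)_{î(k)} ≤ (b)_ι for every partition ι of k into not more than d parts, and the inequality is strict whenever ι ≠ î(k). -/
/-- `ι : Fin d → ℕ` is a partition of `k` into not more than `d` parts:
its parts are nonincreasing and sum to `k`. -/
def IsPartitionOf (d k : ℕ) (ι : Fin d → ℕ) : Prop :=
  Antitone ι ∧ ∑ j, ι j = k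

/-- Strict lexicographic order on tuples: `ι` is lexicographically smaller than `ι'`. -/
def LexLt {d : ℕ} (ι ι' : Fin d → ℕ) : Prop :=
  ∃ i : Fin d, ι i < ι' i ∧ ∀ j : Fin d, j < i → ι j = ι' j

/-- `ι` is the lexicographically smallest partition of `k` into not more than `d` parts. -/
def IsSmallestPartition (d k : ℕ) (ι : Fin d → ℕ) : Prop :=
  IsPartitionOf d k ι ∧ ∀ ι' : Fin d → ℕ, IsPartitionOf d k ι' → ι' ≠ ι → LexLt ι ι'

/-- The generalized hypergeometric coefficient `(b)_ι = ∏_{j=1}^d (b - (j-1)/2)_{k_j}`,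
where `(a)_m` is the rising factorial (with `0`-based indexing for `Fin d`). -/
noncomputable def hgCoeff (d : ℕ) (b : ℝ) (ι : Fin d → ℕ) : ℝ :=
  ∏ j : Fin d, (ascPochhammer ℝ (ι j)).eval (b - (j : ℕ) / 2)

/-!
The bases `b - j/2` are positive and decrease with `j`. If a partition has two parts differing
by at least two, moving one unit from the last part `ι i` at least as large as the larger one to
the first part `ι j` at most as large as the smaller one keeps it a partition and strictly
decreases `(b)_ι`: the factor gained, `b - j/2 + ι j`, is smaller than the factor lost,
`b - i/2 + ι i - 1`. A partition `ι ≠ î(k)` is lexicographically larger than `î(k)`, so it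
exceeds `î(k)` at some index and falls below it at a later one, which produces such a gap. Hence a minimiser of `(b)_ι` over the finitely many
partitions of `k` is `î(k)`, and every other partition can be strictly improved.
-/

open Finset Function

@[to_additive]
theorem Finset.prod_univ_eq_mul_mul_prod_sdiff_pair {α M : Type*} [Fintype α] [DecidableEq α]
    [CommMonoid M] (f : α → M) {i j : α} (hij : i ≠ j) :
    ∏ t, f t = f i * f j * ∏ t ∈ univ \ {i, j}, f t := by
  rw [← prod_sdiff (subset_univ {i, j}), prod_pair hij, mul_comm]

theorem ascPochhammer_eval_mul_succ_lt {R : Type*} [CommRing R] [LinearOrder R]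
    [IsStrictOrderedRing R] {x y : R} (hx : 0 < x) (hy : 0 < y) {m n : ℕ}
    (hxy : x + m < y + n) :
    (ascPochhammer R n).eval y * (ascPochhammer R (m + 1)).eval x <
      (ascPochhammer R (n + 1)).eval y * (ascPochhammer R m).eval x := by
  have hpos := mul_pos (ascPochhammer_pos m x hx) (ascPochhammer_pos n y hy)
  rw [ascPochhammer_succ_eval, ascPochhammer_succ_eval]
  nlinarith

section MoveUnit

variable {α : Type*} [DecidableEq α]

def moveUnit (f : α → ℕ) (i j : α) : α → ℕ :=
  update (update f i (f i - 1)) j (f j + 1)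

variable {f : α → ℕ} {i j : α}

theorem moveUnit_apply_left (hij : i ≠ j) : moveUnit f i j i = f i - 1 := by
  simp [moveUnit, hij]

theorem moveUnit_apply_right : moveUnit f i j j = f j + 1 := by
  simp [moveUnit]

theorem moveUnit_apply_of_ne {t : α} (hi : t ≠ i) (hj : t ≠ j) : moveUnit f i j t = f t := by
  simp [moveUnit, hi, hj]

theorem sum_moveUnit [Fintype α] (hij : i ≠ j) (hfi : 1 ≤ f i) :
    ∑ t, moveUnit f i j t = ∑ t, f t := by
  rw [sum_univ_eq_add_add_sum_sdiff_pair _ hij, sum_univ_eq_add_add_sum_sdiff_pair _ hij,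
    moveUnit_apply_left hij, moveUnit_apply_right]
  congr 1
  · omega
  · refine sum_congr rfl fun t ht => moveUnit_apply_of_ne ?_ ?_ <;> grind

end MoveUnit

section AntitoneMoveUnit

variable {α : Type*} [LinearOrder α] {f : α → ℕ} {i j : α}

theorem Antitone.moveUnit (hf : Antitone f) (hij : i < j)
    (hi : ∀ t, i < t → f t < f i) (hj : ∀ t, t < j → f j < f t) (hgap : f j + 2 ≤ f i) :
    Antitone (moveUnit f i j) := by
  intro s t hst
  have := hf hst
  simp only [_root_.moveUnit, update_apply]
  split_ifs <;> subst_vars <;> grind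

theorem Antitone.exists_antitone_moveUnit [Fintype α] (hf : Antitone f) {i₀ j₀ : α}
    (hgap : f j₀ + 2 ≤ f i₀) :
    ∃ i j, i < j ∧ f j + 2 ≤ f i ∧ Antitone (_root_.moveUnit f i j) := by
  set I := univ.filter fun t => f i₀ ≤ f t
  set J := univ.filter fun t => f t ≤ f j₀
  have hI : I.Nonempty := ⟨i₀, by simp [I]⟩
  have hJ : J.Nonempty := ⟨j₀, by simp [J]⟩
  have hiI : f i₀ ≤ f (I.max' hI) := (mem_filter.mp (I.max'_mem hI)).2
  have hjJ : f (J.min' hJ) ≤ f j₀ := (mem_filter.mp (J.min'_mem hJ)).2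
  have hgap' : f (J.min' hJ) + 2 ≤ f (I.max' hI) := by omega
  have hij : I.max' hI < J.min' hJ := lt_of_not_ge fun h => by have := hf h; omega
  refine ⟨_, _, hij, hgap', hf.moveUnit hij (fun t ht => ?_) (fun t ht => ?_) hgap'⟩
  · have : t ∉ I := fun h => (I.le_max' t h).not_gt ht
    simp only [I, mem_filter, mem_univ, true_and, not_le] at this
    omega
  · have : t ∉ J := fun h => (J.min'_le t h).not_gt ht
    simp only [J, mem_filter, mem_univ, true_and, not_le] at this
    omega

end AntitoneMoveUnit

theorem sub_half_pos_of_lt {d : ℕ} {b : ℝ} (hb : ((d : ℝ) - 1) / 2 < b) (t : Fin d) :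
    0 < b - (t : ℕ) / 2 := by
  have : ((t : ℕ) : ℝ) + 1 ≤ d := by exact_mod_cast t.isLt
  linarith

theorem hgCoeff_pos {d : ℕ} {b : ℝ} (hb : ((d : ℝ) - 1) / 2 < b) (ι : Fin d → ℕ) :
    0 < hgCoeff d b ι :=
  prod_pos fun t _ => ascPochhammer_pos _ _ (sub_half_pos_of_lt hb t)

theorem hgCoeff_moveUnit_lt {d : ℕ} {b : ℝ} (hb : ((d : ℝ) - 1) / 2 < b) {ι : Fin d → ℕ}
    {i j : Fin d} (hij : i < j) (hgap : ι j + 2 ≤ ι i) :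
    hgCoeff d b (moveUnit ι i j) < hgCoeff d b ι := by
  obtain ⟨n, hn⟩ : ∃ n, ι i = n + 1 := ⟨ι i - 1, by omega⟩
  have hpair : (ascPochhammer ℝ n).eval (b - (i : ℕ) / 2) *
      (ascPochhammer ℝ (ι j + 1)).eval (b - (j : ℕ) / 2) <
      (ascPochhammer ℝ (n + 1)).eval (b - (i : ℕ) / 2) *
      (ascPochhammer ℝ (ι j)).eval (b - (j : ℕ) / 2) := by
    refine ascPochhammer_eval_mul_succ_lt (sub_half_pos_of_lt hb j) (sub_half_pos_of_lt hb i) ?_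
    have : ((i : ℕ) : ℝ) ≤ (j : ℕ) := by exact_mod_cast hij.le
    have : (ι j : ℝ) + 2 ≤ n + 1 := by exact_mod_cast hn ▸ hgap
    linarith
  unfold hgCoeff
  rw [prod_univ_eq_mul_mul_prod_sdiff_pair _ hij.ne, prod_univ_eq_mul_mul_prod_sdiff_pair _ hij.ne,
    moveUnit_apply_left hij.ne, moveUnit_apply_right, hn, Nat.add_sub_cancel,
    prod_congr rfl fun t ht => by rw [moveUnit_apply_of_ne (by grind) (by grind)]]
  exact mul_lt_mul_of_pos_right hpair
    (prod_pos fun t _ => ascPochhammer_pos _ _ (sub_half_pos_of_lt hb t))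

namespace IsPartitionOf

variable {d k : ℕ} {ι : Fin d → ℕ}

theorem le (hι : IsPartitionOf d k ι) (t : Fin d) : ι t ≤ k :=
  hι.2 ▸ single_le_sum (fun _ _ => Nat.zero_le _) (mem_univ t)

theorem setOf_finite : Set.Finite {ι | IsPartitionOf d k ι} :=
  (Set.Finite.pi fun _ => Set.finite_Iic k).subset fun _ hι =>
    Set.mem_univ_pi.mpr fun t => hι.le t

theorem exists_add_two_le_of_lexLt {ι' : Fin d → ℕ} (hι : IsPartitionOf d k ι)
    (hι' : IsPartitionOf d k ι') (hlt : LexLt ι ι') : ∃ i j, ι' j + 2 ≤ ι' i := by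
  obtain ⟨i₀, hlt₀, heq⟩ := hlt
  have hhead : ∑ t ∈ univ.filter (· ≤ i₀), ι t < ∑ t ∈ univ.filter (· ≤ i₀), ι' t :=
    sum_lt_sum (fun t ht => ((mem_filter.mp ht).2.lt_or_eq).elim (fun h => (heq t h).le)
      fun h => h ▸ hlt₀.le) ⟨i₀, by simp, hlt₀⟩
  have htail : ∑ t ∈ univ.filter (¬ · ≤ i₀), ι' t < ∑ t ∈ univ.filter (¬ · ≤ i₀), ι t := by
    have h := sum_filter_add_sum_filter_not univ (· ≤ i₀) ι
    have h' := sum_filter_add_sum_filter_not univ (· ≤ i₀) ι'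
    rw [hι.2] at h
    rw [hι'.2] at h'
    omega
  obtain ⟨j₀, hj₀, hlt_j₀⟩ := exists_lt_of_sum_lt htail
  have : ι j₀ ≤ ι i₀ := hι.1 (le_of_not_ge (mem_filter.mp hj₀).2)
  exact ⟨i₀, j₀, by omega⟩

theorem exists_hgCoeff_lt {b : ℝ} (hb : ((d : ℝ) - 1) / 2 < b) (hι : IsPartitionOf d k ι)
    {i₀ j₀ : Fin d} (hgap : ι j₀ + 2 ≤ ι i₀) :
    ∃ ι', IsPartitionOf d k ι' ∧ hgCoeff d b ι' < hgCoeff d b ι := by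
  obtain ⟨i, j, hij, hgap', hanti⟩ := hι.1.exists_antitone_moveUnit hgap
  exact ⟨moveUnit ι i j, ⟨hanti, (sum_moveUnit hij.ne (by omega)).trans hι.2⟩,
    hgCoeff_moveUnit_lt hb hij hgap'⟩

end IsPartitionOf

theorem IsSmallestPartition.exists_add_two_le {d k : ℕ} {ιhat ι : Fin d → ℕ}
    (hmin : IsSmallestPartition d k ιhat) (hι : IsPartitionOf d k ι) (hne : ι ≠ ιhat) :
    ∃ i j, ι j + 2 ≤ ι i :=
  hmin.1.exists_add_two_le_of_lexLt hι (hmin.2 ι hι hne)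

theorem IsSmallestPartition.hgCoeff_le {d k : ℕ} {b : ℝ} (hb : ((d : ℝ) - 1) / 2 < b)
    {ιhat ι : Fin d → ℕ} (hmin : IsSmallestPartition d k ιhat) (hι : IsPartitionOf d k ι) :
    hgCoeff d b ιhat ≤ hgCoeff d b ι := by
  obtain ⟨m, hm, hm_min⟩ :=
    Set.exists_min_image _ (hgCoeff d b) IsPartitionOf.setOf_finite ⟨ιhat, hmin.1⟩
  suffices m = ιhat from this ▸ hm_min ι hι
  by_contra hne
  obtain ⟨i, j, hgap⟩ := hmin.exists_add_two_le hm hne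
  obtain ⟨ι', hι', hlt⟩ := IsPartitionOf.exists_hgCoeff_lt hb hm hgap
  exact (hm_min ι' hι').not_gt hlt

theorem hgCoeff_smallestPartition_min_general (d : ℕ) (b : ℝ)
    (hb : ((d : ℝ) - 1) / 2 < b) (k : ℕ)
    (ιhat : Fin d → ℕ) (hmin : IsSmallestPartition d k ιhat) :
    0 < hgCoeff d b ιhat ∧
      ∀ ι : Fin d → ℕ, IsPartitionOf d k ι →
        hgCoeff d b ιhat ≤ hgCoeff d b ι ∧
          (ι ≠ ιhat → hgCoeff d b ιhat < hgCoeff d b ι) := by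
  refine ⟨hgCoeff_pos hb ιhat, fun ι hι => ⟨hmin.hgCoeff_le hb hι, fun hne => ?_⟩⟩
  obtain ⟨i, j, hgap⟩ := hmin.exists_add_two_le hι hne
  obtain ⟨ι', hι', hlt⟩ := IsPartitionOf.exists_hgCoeff_lt hb hι hgap
  exact (hmin.hgCoeff_le hb hι').trans_lt hlt

theorem hgCoeff_smallestPartition_min (d : ℕ) (hd : 1 ≤ d) (b : ℝ)
    (hb : ((d : ℝ) - 1) / 2 < b) (k : ℕ) (hk : 1 ≤ k)
    (ιhat : Fin d → ℕ) (hmin : IsSmallestPartition d k ιhat) :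
    0 < hgCoeff d b ιhat ∧
      ∀ ι : Fin d → ℕ, IsPartitionOf d k ι →
        hgCoeff d b ιhat ≤ hgCoeff d b ι ∧
          (ι ≠ ιhat → hgCoeff d b ιhat < hgCoeff d b ι) :=
  hgCoeff_smallestPartition_min_general d b hb k ιhat hmin
end

section
/- Let d ≥ 1, let b be a real number with b > (d−1)/2, and let ι = (k_1, …, k_d) be a partition of k into not more than d parts with α(ι) := max{k_i − k_j : 1 ≤ i < j ≤ d} ≥ 2. Choose indices i* < j* with k_{i*} − k_{j*} = α(ι) and with j* − i* minimal among all such pairs. Then the tuple ι' obtained from ι by replacing k_{i*} with k_{i*} − 1 and k_{j*} with k_{j*} + 1 is again a partition of k into not more than d parts, and (b)_{ι'} < (b)_ι. -/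
theorem hgCoeff_rebalancing_step (d : ℕ) (hd : 1 ≤ d) (b : ℝ)
    (hb : ((d : ℝ) - 1) / 2 < b) (k : ℕ) (ι : Fin d → ℕ)
    (hι : IsPartitionOf d k ι)
    -- `α` is the maximum of the differences `ι i - ι j` over `i < j`, and `α ≥ 2`:
    (α : ℕ) (hα : 2 ≤ α)
    (hub : ∀ i j : Fin d, i < j → ι i - ι j ≤ α)
    -- `i* < j*` achieve the maximum `α` with `j* - i*` minimal among all such pairs:
    (istar jstar : Fin d) (hij : istar < jstar) (hach : ι istar - ι jstar = α)
    (hmingap : ∀ i j : Fin d, i < j → ι i - ι j = α →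
      (jstar : ℕ) - (istar : ℕ) ≤ (j : ℕ) - (i : ℕ))
    -- `ι'` is obtained from `ι` by decreasing the `i*`-th part and increasing the `j*`-th:
    (ι' : Fin d → ℕ)
    (hι' : ι' = fun m : Fin d =>
      if m = istar then ι istar - 1 else if m = jstar then ι jstar + 1 else ι m) :
    IsPartitionOf d k ι' ∧ hgCoeff d b ι' < hgCoeff d b ι := by
  have hmono := hι.1
  have hne : istar ≠ jstar := ne_of_lt hij
  have hijv : (istar : ℕ) < (jstar : ℕ) := hij
  have hAle : ι jstar ≤ ι istar := hmono hij.le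
  have hA : ι istar = ι jstar + α := by omega
  -- values of ι'
  have e1 : ι' istar = ι istar - 1 := by rw [hι']; simp
  have e2 : ι' jstar = ι jstar + 1 := by rw [hι']; simp [hne.symm]
  have e3 : ∀ m : Fin d, m ≠ istar → m ≠ jstar → ι' m = ι m := by
    intro m h1 h2; rw [hι']; simp [h1, h2]
  -- middle indices are strictly between the extreme values
  have hmid : ∀ m : Fin d, istar < m → m < jstar →
      ι jstar + 1 ≤ ι m ∧ ι m + 1 ≤ ι istar := by
    intro m h1 h2
    have hv1 : (istar : ℕ) < (m : ℕ) := h1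
    have hv2 : (m : ℕ) < (jstar : ℕ) := h2
    have hle1 : ι m ≤ ι istar := hmono h1.le
    have hle2 : ι jstar ≤ ι m := hmono h2.le
    constructor
    · by_contra h
      have hm : ι istar - ι m = α := by omega
      have := hmingap istar m h1 hm
      omega
    · by_contra h
      have hm : ι m - ι jstar = α := by omega
      have := hmingap m jstar h2 hm
      omega
  -- partition property
  have hpart : IsPartitionOf d k ι' := by
    constructor
    · intro m n hmn
      rcases eq_or_lt_of_le hmn with rfl | hlt
      · exact le_rfl
      by_cases hm1 : m = istar
      · have hlt' : istar < n := hm1 ▸ hlt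
        by_cases hn2 : n = jstar
        · rw [hm1, hn2, e1, e2]; omega
        · have hn1 : n ≠ istar := ne_of_gt hlt'
          rw [hm1, e1, e3 n hn1 hn2]
          rcases lt_or_gt_of_ne hn2 with h | h
          · have := hmid n hlt' h; omega
          · have := hmono h.le; omega
      · by_cases hm2 : m = jstar
        · have hlt' : jstar < n := hm2 ▸ hlt
          have hn1 : n ≠ istar := ne_of_gt (hij.trans hlt')
          have hn2 : n ≠ jstar := ne_of_gt hlt'
          rw [hm2, e2, e3 n hn1 hn2]
          have := hmono hlt'.le; omega
        · rw [e3 m hm1 hm2]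
          by_cases hn1 : n = istar
          · have hlt' : m < istar := hn1 ▸ hlt
            rw [hn1, e1]
            have := hmono hlt'.le; omega
          · by_cases hn2 : n = jstar
            · have hlt' : m < jstar := hn2 ▸ hlt
              rw [hn2, e2]
              rcases lt_or_gt_of_ne hm1 with h | h
              · have := hmono h.le; omega
              · have := hmid m h hlt'; omega
            · rw [e3 n hn1 hn2]; exact hmono hlt.le
    · have hjmem : jstar ∈ Finset.univ.erase istar :=
        Finset.mem_erase.mpr ⟨hne.symm, Finset.mem_univ _⟩
      have hsplit : ∀ f : Fin d → ℕ, ∑ m, f m =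
          f istar + (f jstar + ∑ m ∈ (Finset.univ.erase istar).erase jstar, f m) := by
        intro f
        rw [← Finset.add_sum_erase _ f (Finset.mem_univ istar),
          ← Finset.add_sum_erase _ f hjmem]
      have hE : ∑ m ∈ (Finset.univ.erase istar).erase jstar, ι' m =
          ∑ m ∈ (Finset.univ.erase istar).erase jstar, ι m := by
        apply Finset.sum_congr rfl
        intro m hm
        rw [Finset.mem_erase, Finset.mem_erase] at hm
        exact e3 m hm.2.1 hm.1
      have := hι.2
      rw [hsplit ι'] at *
      rw [hsplit ι] at this
      rw [hE, e1, e2]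
      omega
  refine ⟨hpart, ?_⟩
  -- now the inequality
  set xi : ℝ := b - (istar : ℕ) / 2 with hxi
  set xj : ℝ := b - (jstar : ℕ) / 2 with hxj
  have hxpos : ∀ m : Fin d, 0 < b - (m : ℕ) / 2 := by
    intro m
    have hm : ((m : ℕ) : ℝ) ≤ (d : ℝ) - 1 := by
      have := m.isLt
      have : ((m : ℕ) : ℝ) + 1 ≤ (d : ℝ) := by exact_mod_cast this
      linarith
    linarith [hb]
  have hjmem : jstar ∈ Finset.univ.erase istar :=
    Finset.mem_erase.mpr ⟨hne.symm, Finset.mem_univ _⟩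
  have hsplit : ∀ f : Fin d → ℕ, hgCoeff d b f =
      (ascPochhammer ℝ (f istar)).eval xi *
      ((ascPochhammer ℝ (f jstar)).eval xj *
        ∏ m ∈ (Finset.univ.erase istar).erase jstar,
          (ascPochhammer ℝ (f m)).eval (b - (m : ℕ) / 2)) := by
    intro f
    rw [hgCoeff, ← Finset.mul_prod_erase _ _ (Finset.mem_univ istar),
      ← Finset.mul_prod_erase _ _ hjmem]
  have hE : ∏ m ∈ (Finset.univ.erase istar).erase jstar,
        (ascPochhammer ℝ (ι' m)).eval (b - (m : ℕ) / 2) =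
      ∏ m ∈ (Finset.univ.erase istar).erase jstar,
        (ascPochhammer ℝ (ι m)).eval (b - (m : ℕ) / 2) := by
    apply Finset.prod_congr rfl
    intro m hm
    rw [Finset.mem_erase, Finset.mem_erase] at hm
    rw [e3 m hm.2.1 hm.1]
  set P : ℝ := ∏ m ∈ (Finset.univ.erase istar).erase jstar,
      (ascPochhammer ℝ (ι m)).eval (b - (m : ℕ) / 2) with hP
  have hPpos : 0 < P := by
    apply Finset.prod_pos
    intro m _
    exact ascPochhammer_pos _ _ (hxpos m)
  have hQpos : 0 < (ascPochhammer ℝ (ι istar - 1)).eval xi :=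
    ascPochhammer_pos _ _ (hxpos istar)
  have hRpos : 0 < (ascPochhammer ℝ (ι jstar)).eval xj :=
    ascPochhammer_pos _ _ (hxpos jstar)
  -- expand the successor pochhammers
  have hsucc_i : (ascPochhammer ℝ (ι istar)).eval xi =
      (ascPochhammer ℝ (ι istar - 1)).eval xi * (xi + ((ι istar - 1 : ℕ) : ℝ)) := by
    have h1 : ι istar = (ι istar - 1) + 1 := by omega
    rw [h1]
    rw [ascPochhammer_succ_eval]
    simp
  have hsucc_j : (ascPochhammer ℝ (ι jstar + 1)).eval xj =
      (ascPochhammer ℝ (ι jstar)).eval xj * (xj + (ι jstar : ℝ)) :=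
    ascPochhammer_succ_eval _ _
  rw [hsplit ι', hsplit ι, hE, e1, e2, hsucc_j, hsucc_i]
  have key : xj + (ι jstar : ℝ) < xi + ((ι istar - 1 : ℕ) : ℝ) := by
    have h1 : ((ι istar - 1 : ℕ) : ℝ) = (ι jstar : ℝ) + (α : ℝ) - 1 := by
      have hn : ι istar - 1 = ι jstar + (α - 1) := by omega
      rw [hn, Nat.cast_add, Nat.cast_sub (by omega : 1 ≤ α), Nat.cast_one]
      ring
    have hav : (2 : ℝ) ≤ (α : ℝ) := by exact_mod_cast hα
    have hivjv : ((istar : ℕ) : ℝ) < ((jstar : ℕ) : ℝ) := by exact_mod_cast hijv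
    rw [hxi, hxj, h1]
    linarith
  calc (ascPochhammer ℝ (ι istar - 1)).eval xi *
        ((ascPochhammer ℝ (ι jstar)).eval xj * (xj + (ι jstar : ℝ)) * P)
      = ((ascPochhammer ℝ (ι istar - 1)).eval xi *
          ((ascPochhammer ℝ (ι jstar)).eval xj * P)) * (xj + (ι jstar : ℝ)) := by ring
    _ < ((ascPochhammer ℝ (ι istar - 1)).eval xi *
          ((ascPochhammer ℝ (ι jstar)).eval xj * P)) * (xi + ((ι istar - 1 : ℕ) : ℝ)) := by
        apply mul_lt_mul_of_pos_left key
        positivity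
    _ = (ascPochhammer ℝ (ι istar - 1)).eval xi * (xi + ((ι istar - 1 : ℕ) : ℝ)) *
          ((ascPochhammer ℝ (ι jstar)).eval xj * P) := by ring
end

section
/- Let d ≥ 1, b ∈ ℝ, and k a positive integer, and write î(k) = (k_1, …, k_d) for the lexicographically smallest partition of k into not more than d parts. Then (b)_{î(1)} = b, and: if k_1 = k_2 = … = k_d then (b)_{î(k+1)} = (b)_{î(k)} · (b + k_1); otherwise, if j is the unique index with k_1 = … = k_{j−1} ≠ k_j = … = k_d, then (b)_{î(k+1)} = (b)_{î(k)} · (b + k_j − (j−1)/2). -/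
open Finset

/-- The candidate smallest partition: parts as equal as possible. -/
def smallP (d k : ℕ) : Fin d → ℕ := fun i => k / d + if (i : ℕ) < k % d then 1 else 0

lemma smallP_antitone (d k : ℕ) : Antitone (smallP d k) := by
  intro i j hij
  have : (i : ℕ) ≤ j := hij
  dsimp [smallP]
  split_ifs <;> omega

lemma smallP_sum (d k : ℕ) (hd : 1 ≤ d) : ∑ j, smallP d k j = k := by
  have hmd : k % d < d := Nat.mod_lt _ hd
  unfold smallP
  rw [Finset.sum_add_distrib, Finset.sum_const, Finset.card_univ, Fintype.card_fin]
  have h1 : ∑ j : Fin d, (if (j : ℕ) < k % d then 1 else 0) = k % d := by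
    rw [Fin.sum_univ_eq_sum_range (fun i => if i < k % d then 1 else 0),
      Finset.sum_boole]
    simp only [Nat.cast_id]
    have : Finset.filter (fun x => x < k % d) (Finset.range d) = Finset.range (k % d) := by
      ext x; simp only [Finset.mem_filter, Finset.mem_range]; omega
    rw [this, Finset.card_range]
  rw [h1, smul_eq_mul, Nat.div_add_mod]

lemma smallP_isPartitionOf (d k : ℕ) (hd : 1 ≤ d) : IsPartitionOf d k (smallP d k) :=
  ⟨smallP_antitone d k, smallP_sum d k hd⟩

lemma smallP_isSmallest (d k : ℕ) (hd : 1 ≤ d) : IsSmallestPartition d k (smallP d k) := by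
  refine ⟨smallP_isPartitionOf d k hd, fun ι' hι' hne => ?_⟩
  have hex : (univ.filter (fun i => ι' i ≠ smallP d k i)).Nonempty := by
    by_contra h
    apply hne
    funext i
    by_contra hi
    exact h ⟨i, mem_filter.mpr ⟨mem_univ i, hi⟩⟩
  set i := (univ.filter (fun i => ι' i ≠ smallP d k i)).min' hex with hi_def
  have hi_mem := (univ.filter (fun i => ι' i ≠ smallP d k i)).min'_mem hex
  have hi_ne : ι' i ≠ smallP d k i := (mem_filter.mp hi_mem).2
  have hpre : ∀ j : Fin d, j < i → ι' j = smallP d k j := by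
    intro j hj
    by_contra hjne
    exact absurd (Finset.min'_le _ j (mem_filter.mpr ⟨mem_univ j, hjne⟩)) (not_le.mpr hj)
  refine ⟨i, ?_, fun j hj => (hpre j hj).symm⟩
  rcases lt_or_gt_of_ne hi_ne with hlt | hgt
  · -- ι' i < smallP i : contradiction via sums
    exfalso
    set s := smallP d k i with hs
    have hs1 : 1 ≤ s := Nat.pos_of_ne_zero (by omega)
    set A : Finset (Fin d) := univ.filter (fun j => i ≤ j) with hA
    have hiA : i ∈ A := mem_filter.mpr ⟨mem_univ i, le_refl i⟩
    have hcard : 1 ≤ A.card := Finset.card_pos.mpr ⟨i, hiA⟩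
    have hsplit := Finset.sum_filter_add_sum_filter_not univ (fun j => i ≤ j) ι'
    have hsplit2 := Finset.sum_filter_add_sum_filter_not univ (fun j => i ≤ j) (smallP d k)
    rw [← hA] at hsplit hsplit2
    have hprefeq : ∑ j ∈ univ.filter (fun j => ¬ i ≤ j), ι' j
        = ∑ j ∈ univ.filter (fun j => ¬ i ≤ j), smallP d k j := by
      refine Finset.sum_congr rfl fun j hj => ?_
      exact hpre j (not_le.mp (mem_filter.mp hj).2)
    have htot : ∑ j ∈ A, ι' j = ∑ j ∈ A, smallP d k j := by
      have h1 : ∑ j, ι' j = k := hι'.2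
      have h2 : ∑ j, smallP d k j = k := (smallP_isPartitionOf d k hd).2
      omega
    -- upper bound for ι'
    have hub : ∑ j ∈ A, ι' j ≤ A.card * (s - 1) := by
      calc ∑ j ∈ A, ι' j ≤ ∑ _j ∈ A, (s - 1) := by
            refine Finset.sum_le_sum fun j hj => ?_
            have : ι' j ≤ ι' i := hι'.1 (mem_filter.mp hj).2
            omega
        _ = A.card * (s - 1) := by rw [Finset.sum_const, smul_eq_mul]
    -- lower bound for smallP
    have hlow : ∀ j : Fin d, s - 1 ≤ smallP d k j := by
      intro j
      have h1 : k / d ≤ smallP d k j := by dsimp [smallP]; omega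
      have h2 : s ≤ k / d + 1 := by dsimp [s, smallP]; split_ifs <;> omega
      omega
    have heq : smallP d k i + ∑ x ∈ A.erase i, smallP d k x = ∑ x ∈ A, smallP d k x :=
      Finset.add_sum_erase A (smallP d k) hiA
    have hle0 := Finset.card_nsmul_le_sum (A.erase i) (smallP d k) (s - 1)
      (fun j _ => hlow j)
    rw [Finset.card_erase_of_mem hiA, smul_eq_mul] at hle0
    have hle : (A.card - 1) * (s - 1) ≤ ∑ x ∈ A.erase i, smallP d k x := hle0
    have hm1 : (A.card - 1) * (s - 1) = A.card * (s - 1) - (s - 1) :=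
      Nat.sub_one_mul _ _
    have hm2 : 1 * (s - 1) ≤ A.card * (s - 1) := Nat.mul_le_mul_right _ hcard
    rw [one_mul] at hm2
    omega
  · exact hgt

lemma isSmallestPartition_unique {d k : ℕ} {ι ι' : Fin d → ℕ}
    (h : IsSmallestPartition d k ι) (h' : IsSmallestPartition d k ι') : ι = ι' := by
  by_contra hne
  obtain ⟨i, hi, hpre⟩ := h.2 ι' h'.1 (Ne.symm hne)
  obtain ⟨i', hi', hpre'⟩ := h'.2 ι h.1 hne
  rcases lt_trichotomy i i' with h1 | h1 | h1
  · have := hpre' i h1; omega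
  · subst h1; omega
  · have := hpre i' h1; omega

lemma smallP_succ (d k : ℕ) (hd : 1 ≤ d) (i : Fin d) :
    smallP d (k + 1) i = smallP d k i + if (i : ℕ) = k % d then 1 else 0 := by
  have hdm := Nat.div_add_mod k d
  have hr : k % d < d := Nat.mod_lt _ hd
  have hd' : 0 < d := hd
  rcases Nat.lt_or_ge (k % d + 1) d with hcase | hcase
  · have h1 : (k + 1) / d = k / d ∧ (k + 1) % d = k % d + 1 :=
      (Nat.div_mod_unique hd').mpr ⟨by omega, hcase⟩
    have hi := i.isLt
    dsimp [smallP]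
    rw [h1.1, h1.2]
    split_ifs <;> omega
  · have hre : k % d = d - 1 := by omega
    have h1 : (k + 1) / d = k / d + 1 ∧ (k + 1) % d = 0 :=
      (Nat.div_mod_unique hd').mpr ⟨by rw [Nat.mul_succ]; omega, hd'⟩
    have hi := i.isLt
    dsimp [smallP]
    rw [h1.1, h1.2]
    split_ifs <;> omega

lemma hgCoeff_smallP_succ (d : ℕ) (hd : 1 ≤ d) (b : ℝ) (k : ℕ) :
    hgCoeff d b (smallP d (k + 1)) =
      hgCoeff d b (smallP d k) *
        (b - (k % d : ℕ) / 2 + (smallP d k ⟨k % d, Nat.mod_lt _ hd⟩ : ℕ)) := by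
  set i₀ : Fin d := ⟨k % d, Nat.mod_lt _ hd⟩ with hi₀
  have keyi : smallP d (k + 1) i₀ = smallP d k i₀ + 1 := by
    rw [smallP_succ d k hd i₀]; simp [hi₀]
  have key : ∀ j : Fin d, j ≠ i₀ → smallP d (k + 1) j = smallP d k j := by
    intro j hj
    rw [smallP_succ d k hd j, if_neg, add_zero]
    intro h
    exact hj (Fin.ext h)
  unfold hgCoeff
  rw [← Finset.mul_prod_erase univ _ (Finset.mem_univ i₀),
    ← Finset.mul_prod_erase univ
      (fun j : Fin d => (ascPochhammer ℝ (smallP d k j)).eval (b - (j : ℕ) / 2))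
      (Finset.mem_univ i₀)]
  have hrest : ∏ j ∈ univ.erase i₀, (ascPochhammer ℝ (smallP d (k+1) j)).eval (b - (j : ℕ) / 2)
      = ∏ j ∈ univ.erase i₀, (ascPochhammer ℝ (smallP d k j)).eval (b - (j : ℕ) / 2) := by
    refine Finset.prod_congr rfl fun j hj => ?_
    rw [key j (Finset.mem_erase.mp hj).1]
  rw [hrest, keyi, ascPochhammer_succ_right]
  simp only [Polynomial.eval_mul, Polynomial.eval_add, Polynomial.eval_X,
    Polynomial.eval_natCast]
  have : ((i₀ : ℕ) : ℝ) = (k % d : ℕ) := by rw [hi₀]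
  rw [this]
  ring

lemma hgCoeff_smallP_zero (d : ℕ) (b : ℝ) : hgCoeff d b (smallP d 0) = 1 := by
  unfold hgCoeff smallP
  simp

theorem hgCoeff_smallestPartition_recurrence (d : ℕ) (hd : 1 ≤ d) (b : ℝ)
    (k : ℕ) (hk : 1 ≤ k)
    (ι1 : Fin d → ℕ) (h1 : IsSmallestPartition d 1 ι1)
    (ιk : Fin d → ℕ) (hιk : IsSmallestPartition d k ιk)
    (ιk1 : Fin d → ℕ) (hιk1 : IsSmallestPartition d (k + 1) ιk1) :
    hgCoeff d b ι1 = b ∧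
      -- if all the parts of `î(k)` are equal, `(b)_{î(k+1)} = (b)_{î(k)} (b + k₁)`:
      ((∀ i j : Fin d, ιk i = ιk j) →
        hgCoeff d b ιk1 = hgCoeff d b ιk * (b + (ιk ⟨0, hd⟩ : ℕ))) ∧
      -- otherwise, if `j` is the (0-based) index at which the parts first change,
      -- `(b)_{î(k+1)} = (b)_{î(k)} (b + k_j - (j-1)/2)` (with 1-based `j` as in the paper):
      (∀ j : Fin d, 0 < (j : ℕ) →
        (∀ i : Fin d, (i : ℕ) < (j : ℕ) → ιk i = ιk ⟨0, hd⟩) →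
        (∀ i : Fin d, (j : ℕ) ≤ (i : ℕ) → ιk i = ιk j) →
        ιk ⟨0, hd⟩ ≠ ιk j →
        hgCoeff d b ιk1 = hgCoeff d b ιk * (b + (ιk j : ℕ) - (j : ℕ) / 2)) := by
  have e1 : ι1 = smallP d 1 := isSmallestPartition_unique h1 (smallP_isSmallest d 1 hd)
  have ek : ιk = smallP d k := isSmallestPartition_unique hιk (smallP_isSmallest d k hd)
  have ek1 : ιk1 = smallP d (k + 1) :=
    isSmallestPartition_unique hιk1 (smallP_isSmallest d (k + 1) hd)
  subst e1 ek ek1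
  have hrd : k % d < d := Nat.mod_lt _ hd
  refine ⟨?_, ?_, ?_⟩
  · -- (b)_{î(1)} = b
    have h := hgCoeff_smallP_succ d hd b 0
    rw [hgCoeff_smallP_zero, one_mul] at h
    simp only [Nat.zero_mod, Nat.zero_div, smallP, Nat.cast_zero] at h
    simpa using h
  · intro hall
    have hr0 : k % d = 0 := by
      rcases Nat.eq_or_lt_of_le hd with hd1 | hd2
      · omega
      · have h := hall ⟨0, hd⟩ ⟨d - 1, by omega⟩
        dsimp [smallP] at h
        split_ifs at h <;> omega
    rw [hgCoeff_smallP_succ d hd b k]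
    have v1 : smallP d k ⟨k % d, Nat.mod_lt _ hd⟩ = k / d := by
      dsimp [smallP]; rw [if_neg (lt_irrefl _), add_zero]
    have v2 : smallP d k ⟨0, hd⟩ = k / d := by
      dsimp [smallP]; split_ifs <;> omega
    rw [v1, v2, hr0]
    norm_num
  · intro j hj hlt hge hne
    dsimp [smallP] at hne
    have hcond : 0 < k % d ∧ k % d ≤ (j : ℕ) := by
      split_ifs at hne <;> omega
    have hjr : (j : ℕ) = k % d := by
      by_contra hc
      have hrlt : k % d < (j : ℕ) := by omega
      have h := hlt ⟨k % d, hrd⟩ hrlt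
      dsimp [smallP] at h
      rw [if_neg (lt_irrefl _), if_pos hcond.1] at h
      omega
    rw [hgCoeff_smallP_succ d hd b k]
    have hfin : (⟨k % d, Nat.mod_lt _ hd⟩ : Fin d) = j := Fin.ext hjr.symm
    rw [hfin]
    have hcast : ((k % d : ℕ) : ℝ) = ((j : ℕ) : ℝ) := by exact_mod_cast hjr.symm
    rw [hcast]
    ring
end

section
/- Let d ≥ 1, let b be a real number with b > (d−1)/2, and let k ≥ d be an integer. Then (b)_{î(k)} < (b)_{î(k+1)}, where î(k) and î(k+1) denote the lexicographically smallest partitions of k and of k+1, respectively, into not more than d parts. -/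
/-- The balanced partition. -/
def bal (d k : ℕ) (j : Fin d) : ℕ := k / d + if (j : ℕ) < k % d then 1 else 0

lemma bal_antitone (d k : ℕ) : Antitone (bal d k) := by
  intro i j hij
  have hij' : (i : ℕ) ≤ (j : ℕ) := hij
  unfold bal
  split <;> split <;> omega

lemma bal_sum (d k : ℕ) (hd : 1 ≤ d) : ∑ j, bal d k j = k := by
  unfold bal
  rw [Fin.sum_univ_eq_sum_range (fun i => k / d + if i < k % d then 1 else 0) d,
    Finset.sum_add_distrib, Finset.sum_const, Finset.card_range, smul_eq_mul]
  have hr : k % d < d := Nat.mod_lt _ hd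
  have key : ∀ n : ℕ, ∑ i ∈ Finset.range n, (if i < k % d then 1 else 0) = min n (k % d) := by
    intro n
    induction n with
    | zero => simp
    | succ n ih => rw [Finset.sum_range_succ, ih]; split <;> omega
  rw [key d]
  have := Nat.div_add_mod k d
  omega

lemma bal_smallest (d k : ℕ) (hd : 1 ≤ d) : IsSmallestPartition d k (bal d k) := by
  refine ⟨⟨bal_antitone d k, bal_sum d k hd⟩, ?_⟩
  intro ι' hι' hne
  have hex : ∃ i : Fin d, ι' i ≠ bal d k i := by
    by_contra h
    push_neg at h
    exact hne (funext h)
  classical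
  let s := Finset.univ.filter (fun i : Fin d => ι' i ≠ bal d k i)
  have hs : s.Nonempty := by
    obtain ⟨i, hi⟩ := hex
    exact ⟨i, by simp [s, hi]⟩
  set i := s.min' hs with hidef
  have hi : ι' i ≠ bal d k i := by
    have := s.min'_mem hs
    simpa [s] using this
  have hprev : ∀ j : Fin d, j < i → ι' j = bal d k j := by
    intro j hj
    by_contra hc
    have : i ≤ j := s.min'_le j (by simp [s, hc])
    exact absurd hj (not_lt.2 this)
  rcases lt_or_gt_of_ne hi with hlt | hgt
  · exfalso
    have hble : ∀ j : Fin d, bal d k i ≤ bal d k j + 1 := by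
      intro j
      unfold bal
      split <;> split <;> omega
    have hle : ∀ j ∈ Finset.univ.filter (fun j : Fin d => ¬ j < i), ι' j ≤ bal d k j := by
      intro j hj
      simp only [Finset.mem_filter, not_lt] at hj
      have h1 : ι' j ≤ ι' i := hι'.1 hj.2
      have := hble j
      omega
    have hstrict : ∑ j ∈ Finset.univ.filter (fun j : Fin d => ¬ j < i), ι' j <
        ∑ j ∈ Finset.univ.filter (fun j : Fin d => ¬ j < i), bal d k j :=
      Finset.sum_lt_sum hle ⟨i, by simp, hlt⟩
    have heq : ∑ j ∈ Finset.univ.filter (fun j : Fin d => j < i), ι' j =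
        ∑ j ∈ Finset.univ.filter (fun j : Fin d => j < i), bal d k j :=
      Finset.sum_congr rfl fun j hj => hprev j (by simpa using hj)
    have h1 := Finset.sum_filter_add_sum_filter_not Finset.univ (fun j : Fin d => j < i) ι'
    have h2 := Finset.sum_filter_add_sum_filter_not Finset.univ (fun j : Fin d => j < i) (bal d k)
    rw [hι'.2] at h1
    rw [bal_sum d k hd] at h2
    omega
  · exact ⟨i, hgt, fun j hj => (hprev j hj).symm⟩

lemma lexLt_asymm {d : ℕ} {ι ι' : Fin d → ℕ} (h1 : LexLt ι ι') (h2 : LexLt ι' ι) : False := by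
  obtain ⟨i, hi, hprev⟩ := h1
  obtain ⟨i', hi', hprev'⟩ := h2
  rcases lt_trichotomy i i' with h | h | h
  · have := hprev' i h; omega
  · subst h; omega
  · have := hprev i' h; omega

lemma smallest_eq_bal {d k : ℕ} (hd : 1 ≤ d) {ι : Fin d → ℕ}
    (h : IsSmallestPartition d k ι) : ι = bal d k := by
  by_contra hne
  have h1 := h.2 (bal d k) (bal_smallest d k hd).1 (fun hc => hne hc.symm)
  have h2 := (bal_smallest d k hd).2 ι h.1 hne
  exact lexLt_asymm h1 h2

lemma bal_succ (d k : ℕ) (hd : 1 ≤ d) :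
    bal d (k + 1) = Function.update (bal d k) ⟨k % d, Nat.mod_lt _ hd⟩
      (bal d k ⟨k % d, Nat.mod_lt _ hd⟩ + 1) := by
  funext j
  obtain ⟨q, r, hr, hk⟩ : ∃ q r, r < d ∧ k = d * q + r :=
    ⟨k / d, k % d, Nat.mod_lt _ hd, by have := Nat.div_add_mod k d; omega⟩
  have hkd : k / d = q := by
    rw [hk, Nat.mul_add_div hd, Nat.div_eq_of_lt hr, add_zero]
  have hkm : k % d = r := by
    rw [hk, Nat.mul_add_mod, Nat.mod_eq_of_lt hr]
  rw [Function.update_apply]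
  have hje : (j = (⟨k % d, Nat.mod_lt _ hd⟩ : Fin d)) ↔ (j : ℕ) = r := by
    rw [Fin.ext_iff]; simp [hkm]
  have hj := j.isLt
  rcases Nat.lt_or_ge (r + 1) d with h | h
  · have h1 : (k + 1) / d = q := by
      rw [hk, show d * q + r + 1 = d * q + (r + 1) from rfl, Nat.mul_add_div hd,
        Nat.div_eq_of_lt h, add_zero]
    have h2 : (k + 1) % d = r + 1 := by
      rw [hk, show d * q + r + 1 = d * q + (r + 1) from rfl, Nat.mul_add_mod,
        Nat.mod_eq_of_lt h]
    unfold bal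
    simp only [hkd, hkm, h1, h2, Fin.ext_iff, Fin.val_mk]
    split_ifs <;> omega
  · have hrd : r + 1 = d := by omega
    have h1 : (k + 1) / d = q + 1 := by
      rw [hk, show d * q + r + 1 = d * (q + 1) from by rw [Nat.mul_succ]; omega, Nat.mul_div_cancel_left _ hd]
    have h2 : (k + 1) % d = 0 := by
      rw [hk, show d * q + r + 1 = d * (q + 1) from by rw [Nat.mul_succ]; omega, Nat.mul_mod_right]
    unfold bal
    simp only [hkd, hkm, h1, h2, Fin.ext_iff, Fin.val_mk]
    split_ifs <;> omega

theorem hgCoeff_smallestPartition_strictMono (d : ℕ) (hd : 1 ≤ d) (b : ℝ)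
    (hb : ((d : ℝ) - 1) / 2 < b) (k : ℕ) (hk : d ≤ k)
    (ιk : Fin d → ℕ) (hιk : IsSmallestPartition d k ιk)
    (ιk1 : Fin d → ℕ) (hιk1 : IsSmallestPartition d (k + 1) ιk1) :
    hgCoeff d b ιk < hgCoeff d b ιk1 := by
  classical
  have h1 : ιk = bal d k := smallest_eq_bal hd hιk
  have h2 : ιk1 = bal d (k + 1) := smallest_eq_bal hd hιk1
  set j0 : Fin d := ⟨k % d, Nat.mod_lt _ hd⟩ with hj0
  set ι : Fin d → ℕ := bal d k with hι
  rw [h1, h2, bal_succ d k hd, ← hj0, ← hι]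
  have hpos : ∀ j : Fin d, (0 : ℝ) < b - (j : ℕ) / 2 := by
    intro j
    have hjd : ((j : ℕ) : ℝ) + 1 ≤ (d : ℝ) := by exact_mod_cast j.isLt
    have : ((j : ℕ) : ℝ) / 2 ≤ ((d : ℝ) - 1) / 2 := by linarith
    linarith
  have hupd : (fun j : Fin d =>
      (ascPochhammer ℝ ((Function.update ι j0 (ι j0 + 1)) j)).eval (b - (j : ℕ) / 2)) =
      Function.update (fun j : Fin d => (ascPochhammer ℝ (ι j)).eval (b - (j : ℕ) / 2)) j0
        ((ascPochhammer ℝ (ι j0 + 1)).eval (b - (j0 : ℕ) / 2)) := by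
    funext j
    by_cases hj : j = j0 <;> simp [Function.update_apply, hj]
  unfold hgCoeff
  rw [hupd, Finset.prod_update_of_mem (Finset.mem_univ j0),
    ← Finset.mul_prod_erase Finset.univ
      (fun j : Fin d => (ascPochhammer ℝ (ι j)).eval (b - (j : ℕ) / 2)) (Finset.mem_univ j0),
    ascPochhammer_succ_eval, Finset.sdiff_singleton_eq_erase]
  have hP : 0 < ∏ j ∈ Finset.univ.erase j0,
      (ascPochhammer ℝ (ι j)).eval (b - (j : ℕ) / 2) :=
    Finset.prod_pos fun j _ => ascPochhammer_pos _ _ (hpos j)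
  have hf : 0 < (ascPochhammer ℝ (ι j0)).eval (b - (j0 : ℕ) / 2) :=
    ascPochhammer_pos _ _ (hpos j0)
  have hq1 : 1 ≤ ι j0 := by
    have : 1 ≤ k / d := (Nat.one_le_div_iff (by omega)).2 hk
    simp only [hι, bal]
    omega
  have hc : (1 : ℝ) < b - (j0 : ℕ) / 2 + (ι j0 : ℕ) := by
    have := hpos j0
    have : (1 : ℝ) ≤ (ι j0 : ℝ) := by exact_mod_cast hq1
    linarith [hpos j0]
  nlinarith [mul_pos hf hP]
end

section
/- Let κ, σ, ρ, T be real numbers with σ ≠ 0 and T > 0, let u ∈ ℂ, and let η ∈ ℂ satisfy η² = (κ + uσρ)² − σ²u(u+1) and η ≠ 0. Define D(t) = η(e^{η(T−t)} + 1) + (κ + uσρ)(e^{η(T−t)} − 1), and assume D(t) ≠ 0 for all t ∈ [0, T]. Then the function ψ(t) = −u(u+1)(e^{η(T−t)} − 1)/D(t) satisfies ψ(T) = 0 and, for every t ∈ [0, T], ψ is differentiable at t with ψ′(t) = (σ²/2)ψ(t)² + (κ + uσρ)ψ(t) + u(u+1)/2. -/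
open Complex

set_option maxHeartbeats 1000000 in
theorem heston_riccati_solution (κ σ ρ T : ℝ) (hσ : σ ≠ 0) (hT : 0 < T)
    (u η : ℂ) (hη2 : η ^ 2 = ((κ : ℂ) + u * σ * ρ) ^ 2 - (σ : ℂ) ^ 2 * u * (u + 1))
    (hη : η ≠ 0)
    (D : ℝ → ℂ)
    (hD : ∀ t : ℝ, D t = η * (Complex.exp (η * (T - t)) + 1) +
      ((κ : ℂ) + u * σ * ρ) * (Complex.exp (η * (T - t)) - 1))
    (hD0 : ∀ t ∈ Set.Icc (0 : ℝ) T, D t ≠ 0)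
    (ψ : ℝ → ℂ)
    (hψ : ∀ t : ℝ, ψ t = -u * (u + 1) * (Complex.exp (η * (T - t)) - 1) / D t) :
    ψ T = 0 ∧
      ∀ t ∈ Set.Icc (0 : ℝ) T,
        HasDerivAt ψ
          ((σ : ℂ) ^ 2 / 2 * (ψ t) ^ 2 + ((κ : ℂ) + u * σ * ρ) * ψ t + u * (u + 1) / 2)
          t := by
  have hEd : ∀ t : ℝ, HasDerivAt (fun s : ℝ => Complex.exp (η * (T - s)))
      (-η * Complex.exp (η * (T - t))) t := by
    intro t
    have h1 : HasDerivAt (fun s : ℝ => η * ((T : ℂ) - (s : ℝ))) (-η) t := by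
      have h0 : HasDerivAt (fun s : ℝ => ((s : ℝ) : ℂ)) 1 t := Complex.ofRealCLM.hasDerivAt
      have := (h0.const_sub (T : ℂ)).const_mul η
      simpa using this
    have := h1.cexp
    simpa [mul_comm] using this
  constructor
  · rw [hψ T]
    simp
  · intro t ht
    have hDne := hD0 t ht
    have hψfun : ψ = fun s : ℝ =>
        -u * (u + 1) * (Complex.exp (η * (T - s)) - 1) / D s := funext hψ
    have hDfun : D = fun s : ℝ => η * (Complex.exp (η * (T - s)) + 1) +
        ((κ : ℂ) + u * σ * ρ) * (Complex.exp (η * (T - s)) - 1) := funext hD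
    set E := Complex.exp (η * (T - t)) with hE
    have hN : HasDerivAt (fun s : ℝ => -u * (u + 1) * (Complex.exp (η * (T - s)) - 1))
        (-u * (u + 1) * (-η * E)) t := by
      exact ((hEd t).sub_const 1).const_mul _
    have hDd : HasDerivAt D
        (η * (-η * E) + ((κ : ℂ) + u * σ * ρ) * (-η * E)) t := by
      rw [hDfun]
      exact (((hEd t).add_const 1).const_mul η).add (((hEd t).sub_const 1).const_mul _)
    have hq := hN.div hDd hDne
    set K : ℂ := (κ : ℂ) + u * σ * ρ with hK
    have hD2 : D t = η * (E + 1) + K * (E - 1) := by rw [hD t, ← hE]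
    have hx : ψ t * D t = -u * (u + 1) * (E - 1) := by
      rw [hψ t, ← hE]
      exact div_mul_cancel₀ _ hDne
    have hkey : (-u * (u + 1) * (-η * E) * D t -
        -u * (u + 1) * (Complex.exp (η * (↑T - ↑t)) - 1) *
          (η * (-η * E) + K * (-η * E))) / D t ^ 2 =
        (σ : ℂ) ^ 2 / 2 * (ψ t) ^ 2 + K * ψ t + u * (u + 1) / 2 := by
      rw [← hE, div_eq_iff (pow_ne_zero 2 hDne)]
      linear_combination (-((σ:ℂ) ^ 2 / 2 * (ψ t) * (D t) - (σ:ℂ) ^ 2 / 2 * (u * (u + 1)) * (E - 1) + K * (D t))) * hx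
        + (u * (u + 1) * η * E + K * (u * (u + 1)) * (E - 1) - u * (u + 1) / 2 * (D t + (η * (E + 1) + K * (E - 1)))) * hD2
        + (-(u * (u + 1) * (E - 1) ^ 2 / 2)) * hη2
    have hmain : HasDerivAt ψ ((-u * (u + 1) * (-η * E) * D t -
        -u * (u + 1) * (Complex.exp (η * (↑T - ↑t)) - 1) *
          (η * (-η * E) + K * (-η * E))) / D t ^ 2) t := by
      rw [hψfun]; exact hq
    rw [hkey] at hmain
    exact hmain
end

section
/- Let κ, σ, ρ, T be real numbers with σ ≠ 0 and T > 0, let u ∈ ℂ, and let η ∈ ℂ satisfy η² = (κ + uσρ)² − σ²u(u+1) and η ≠ 0. Define D(t) = η(e^{η(T−t)} + 1) + (κ + uσρ)(e^{η(T−t)} − 1), assume D(t) ≠ 0 for all t ∈ [0, T], and set ψ(t) = −u(u+1)(e^{η(T−t)} − 1)/D(t). Then the function Ψ(t) = 2η e^{η(T−t)/2}/D(t) satisfies Ψ(T) = 1 and, for every t ∈ [0, T], Ψ is differentiable at t with Ψ′(t) = (1/2)(κ + uσρ + σ²ψ(t))Ψ(t). -/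
/-!
With `b = κ + uσρ` and `E(t) = exp (η (T - t))`, the denominator is `D = η (E + 1) + b (E - 1)`,
so `D' = -η (η + b) E`, and the quotient rule gives `Ψ' / Ψ = -η/2 - D'/D`. After multiplying
by `2D` the claimed equation `Ψ' / Ψ = (b + σ²ψ) / 2` becomes a polynomial identity in `η, b, E`
that holds exactly because `η² = b² - σ²u(u+1)`. At `t = T` we have `E = 1` and `D = 2η`.
-/

open Complex

theorem hasDerivAt_mul_sub_ofReal (a : ℂ) (T t : ℝ) :
    HasDerivAt (fun s : ℝ => a * ((T : ℂ) - s)) (-a) t := by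
  simpa using ((hasDerivAt_id t).ofReal_comp.const_sub (T : ℂ)).const_mul a

theorem heston_denom_identity {η b c E D : ℂ} (hη2 : η ^ 2 = b ^ 2 - c)
    (hD : D = η * (E + 1) + b * (E - 1)) :
    2 * η * (η + b) * E - η * D = b * D - c * (E - 1) := by
  subst hD
  linear_combination (E - 1) * hη2

theorem heston_Psi_deriv_eq {η b c E F D : ℂ} (hη2 : η ^ 2 = b ^ 2 - c)
    (hD : D = η * (E + 1) + b * (E - 1)) (hD0 : D ≠ 0) :
    (2 * η * (F * (-η / 2)) * D - 2 * η * F * (η * (E * -η) + b * (E * -η))) / D ^ 2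
      = 1 / 2 * (b + -c * (E - 1) / D) * (2 * η * F / D) := by
  field_simp
  linear_combination (η * F) * heston_denom_identity hη2 hD

theorem heston_Psi_solution_general (κ σ ρ T : ℝ)
    (u η : ℂ) (hη2 : η ^ 2 = ((κ : ℂ) + u * σ * ρ) ^ 2 - (σ : ℂ) ^ 2 * u * (u + 1))
    (hη : η ≠ 0)
    (D : ℝ → ℂ)
    (hD : ∀ t : ℝ, D t = η * (Complex.exp (η * (T - t)) + 1) +
      ((κ : ℂ) + u * σ * ρ) * (Complex.exp (η * (T - t)) - 1))
    (hD0 : ∀ t ∈ Set.Icc (0 : ℝ) T, D t ≠ 0)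
    (ψ : ℝ → ℂ)
    (hψ : ∀ t : ℝ, ψ t = -u * (u + 1) * (Complex.exp (η * (T - t)) - 1) / D t)
    (Ψ : ℝ → ℂ)
    (hΨ : ∀ t : ℝ, Ψ t = 2 * η * Complex.exp (η * (T - t) / 2) / D t) :
    Ψ T = 1 ∧
      ∀ t ∈ Set.Icc (0 : ℝ) T,
        HasDerivAt Ψ ((1 / 2) * ((κ : ℂ) + u * σ * ρ + (σ : ℂ) ^ 2 * ψ t) * Ψ t) t := by
  refine ⟨?_, fun t ht => ?_⟩
  · have hDT : D T = 2 * η := by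
      rw [hD]
      simp only [sub_self, mul_zero, Complex.exp_zero]
      ring
    rw [hΨ, hDT]
    simp [hη]
  · have hE := (hasDerivAt_mul_sub_ofReal η T t).cexp
    have hF := ((hasDerivAt_mul_sub_ofReal η T t).div_const 2).cexp
    have hDd : HasDerivAt D (η * (cexp (η * (T - t)) * -η) +
        ((κ : ℂ) + u * σ * ρ) * (cexp (η * (T - t)) * -η)) t := by
      rw [funext hD]
      exact ((hE.add_const 1).const_mul η).add ((hE.sub_const 1).const_mul _)
    rw [hψ t, hΨ t, funext hΨ]
    refine ((hF.const_mul (2 * η)).div hDd (hD0 t ht)).congr_deriv ?_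
    rw [heston_Psi_deriv_eq hη2 (hD t) (hD0 t ht)]
    ring

theorem heston_Psi_solution (κ σ ρ T : ℝ) (hσ : σ ≠ 0) (hT : 0 < T)
    (u η : ℂ) (hη2 : η ^ 2 = ((κ : ℂ) + u * σ * ρ) ^ 2 - (σ : ℂ) ^ 2 * u * (u + 1))
    (hη : η ≠ 0)
    (D : ℝ → ℂ)
    (hD : ∀ t : ℝ, D t = η * (Complex.exp (η * (T - t)) + 1) +
      ((κ : ℂ) + u * σ * ρ) * (Complex.exp (η * (T - t)) - 1))
    (hD0 : ∀ t ∈ Set.Icc (0 : ℝ) T, D t ≠ 0)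
    (ψ : ℝ → ℂ)
    (hψ : ∀ t : ℝ, ψ t = -u * (u + 1) * (Complex.exp (η * (T - t)) - 1) / D t)
    (Ψ : ℝ → ℂ)
    (hΨ : ∀ t : ℝ, Ψ t = 2 * η * Complex.exp (η * (T - t) / 2) / D t) :
    Ψ T = 1 ∧
      ∀ t ∈ Set.Icc (0 : ℝ) T,
        HasDerivAt Ψ ((1 / 2) * ((κ : ℂ) + u * σ * ρ + (σ : ℂ) ^ 2 * ψ t) * Ψ t) t :=
  heston_Psi_solution_general κ σ ρ T u η hη2 hη D hD hD0 ψ hψ Ψ hΨ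
end

section
/- Let κ, σ, ρ, T be real numbers with σ ≠ 0 and T > 0, let u ∈ ℂ, and let η ∈ ℂ satisfy η² = (κ + uσρ)² − σ²u(u+1) and η ≠ 0. Define D(t) = η(e^{η(T−t)} + 1) + (κ + uσρ)(e^{η(T−t)} − 1), assume D(t) ≠ 0 for all t ∈ [0, T], and set Ψ(t) = 2η e^{η(T−t)/2}/D(t). Then the function V(t) = (σ²/2)(e^{η(T−t)} − 1)/D(t) satisfies V(T) = 0 and, for every t ∈ [0, T], V is differentiable at t with V′(t) = −(σ²/4)Ψ(t)². -/
/-!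
With `E(t) = exp(η(T - t))`, `V` is the Möbius transform `(σ²/2)(E - 1)/((η + β)E + (η - β))` of `E`,
where `β = κ + uσρ`. The derivative of such a transform is the determinant `2η` times `E'/D²`,
and `E' = -ηE`, so `V' = -σ²η²E/D²`, which is `-(σ²/4)Ψ²` because `E = (exp(η(T - t)/2))²`.
-/

open Complex

theorem HasDerivAt.linear_fractional {𝕜 𝕜' : Type*} [NontriviallyNormedField 𝕜]
    [NontriviallyNormedField 𝕜'] [NormedAlgebra 𝕜 𝕜'] {f : 𝕜 → 𝕜'} {f' : 𝕜'} {x : 𝕜}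
    (p q r s : 𝕜') (hf : HasDerivAt f f' x) (hx : r * f x + s ≠ 0) :
    HasDerivAt (fun y => (p * f y + q) / (r * f y + s))
      ((p * s - q * r) * f' / (r * f x + s) ^ 2) x := by
  refine (((hf.const_mul p).add_const q).div ((hf.const_mul r).add_const s) hx).congr_deriv ?_
  ring

theorem hasDerivAt_cexp_mul_sub (η : ℂ) (T t : ℝ) :
    HasDerivAt (fun s : ℝ => cexp (η * (T - s))) (-η * cexp (η * (T - t))) t := by
  have h : HasDerivAt (fun s : ℝ => η * ((T : ℂ) - s)) (-η) t := by
    simpa using ((hasDerivAt_id t).ofReal_comp.const_sub (T : ℂ)).const_mul η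
  simpa [mul_comm] using h.cexp

theorem heston_V_solution_general (κ σ ρ T : ℝ)
    (u η : ℂ)
    (D : ℝ → ℂ)
    (hD : ∀ t : ℝ, D t = η * (Complex.exp (η * (T - t)) + 1) +
      ((κ : ℂ) + u * σ * ρ) * (Complex.exp (η * (T - t)) - 1))
    (hD0 : ∀ t ∈ Set.Icc (0 : ℝ) T, D t ≠ 0)
    (Ψ : ℝ → ℂ)
    (hΨ : ∀ t : ℝ, Ψ t = 2 * η * Complex.exp (η * (T - t) / 2) / D t)
    (V : ℝ → ℂ)
    (hV : ∀ t : ℝ, V t = (σ : ℂ) ^ 2 / 2 * (Complex.exp (η * (T - t)) - 1) / D t) :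
    V T = 0 ∧
      ∀ t ∈ Set.Icc (0 : ℝ) T,
        HasDerivAt V (-((σ : ℂ) ^ 2 / 4) * (Ψ t) ^ 2) t := by
  refine ⟨by simp [hV], fun t ht => ?_⟩
  set β : ℂ := (κ : ℂ) + u * σ * ρ
  set E : ℝ → ℂ := fun s => cexp (η * (T - s)) with hE
  have hD_mobius (s : ℝ) : D s = (η + β) * E s + (η - β) := by rw [hD]; ring
  have hV_mobius : V = fun s => (σ : ℂ) ^ 2 / 2 * ((1 * E s + -1) / ((η + β) * E s + (η - β))) := by
    funext s; rw [hV, hD_mobius]; ring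
  have hDt : (η + β) * E t + (η - β) ≠ 0 := hD_mobius t ▸ hD0 t ht
  have hE_sq : cexp (η * (T - t)) = cexp (η * (T - t) / 2) ^ 2 := by rw [← exp_nat_mul]; ring_nf
  rw [hV_mobius]
  refine (((hasDerivAt_cexp_mul_sub η T t).linear_fractional 1 (-1) (η + β) (η - β) hDt).const_mul
    ((σ : ℂ) ^ 2 / 2)).congr_deriv ?_
  rw [hΨ, hD_mobius]
  simp only [hE, hE_sq]
  field_simp
  ring

theorem heston_V_solution (κ σ ρ T : ℝ) (hσ : σ ≠ 0) (hT : 0 < T)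
    (u η : ℂ) (hη2 : η ^ 2 = ((κ : ℂ) + u * σ * ρ) ^ 2 - (σ : ℂ) ^ 2 * u * (u + 1))
    (hη : η ≠ 0)
    (D : ℝ → ℂ)
    (hD : ∀ t : ℝ, D t = η * (Complex.exp (η * (T - t)) + 1) +
      ((κ : ℂ) + u * σ * ρ) * (Complex.exp (η * (T - t)) - 1))
    (hD0 : ∀ t ∈ Set.Icc (0 : ℝ) T, D t ≠ 0)
    (Ψ : ℝ → ℂ)
    (hΨ : ∀ t : ℝ, Ψ t = 2 * η * Complex.exp (η * (T - t) / 2) / D t)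
    (V : ℝ → ℂ)
    (hV : ∀ t : ℝ, V t = (σ : ℂ) ^ 2 / 2 * (Complex.exp (η * (T - t)) - 1) / D t) :
    V T = 0 ∧
      ∀ t ∈ Set.Icc (0 : ℝ) T,
        HasDerivAt V (-((σ : ℂ) ^ 2 / 4) * (Ψ t) ^ 2) t :=
  heston_V_solution_general κ σ ρ T u η D hD hD0 Ψ hΨ V hV
end

section
/- Let d ≥ 1, T > 0, Σ ∈ M_d(ℝ), ϑ ∈ M_d(ℝ), and let H : [0, T] → M_d(ℝ) be continuous. Let Ψ, V : [0, T] → M_d(ℝ) be differentiable with Ψ′(t) = −H(t)ᵀ Ψ(t), V′(t) = −Ψ(t)ᵀ Σᵀ Σ Ψ(t) for all t ∈ [0, T], Ψ(T) = I_d, and V(T) = 0. Suppose that I_d + 2V(t)ϑ is invertible for every t ∈ [0, T]. Then the function ψ̂(t) = Ψ(t) ϑ (I_d + 2V(t)ϑ)^{−1} Ψ(t)ᵀ satisfies ψ̂(T) = ϑ and, for every t ∈ [0, T], ψ̂ is differentiable at t with ψ̂′(t) = 2 ψ̂(t) Σᵀ Σ ψ̂(t) − H(t)ᵀ ψ̂(t)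 − ψ̂(t) H(t). -/
open Matrix
open scoped Matrix.Norms.Operator

/-!
Entrywise derivatives of matrix functions are derivatives for any matrix norm, so the product
rule and the derivative `-A⁻¹ A' A⁻¹` of inversion apply to `ψ̂ = Ψ ϑ N Ψᵀ` with
`N = (1 + 2Vϑ)⁻¹`. Since `N' = -N (2V'ϑ) N = 2 N Ψᵀ SᵀS Ψ ϑ N`, the middle term of the product
rule is `2 (Ψ ϑ N Ψᵀ) SᵀS (Ψ ϑ N Ψᵀ) = 2 ψ̂ SᵀS ψ̂`, while `Ψ' = -HᵀΨ` produces the two linear terms.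
-/

section

variable {𝕜 : Type*} [RCLike 𝕜] {m n : Type*} [Fintype m] [Fintype n]

theorem hasDerivAt_matrix_iff {A : 𝕜 → Matrix m n 𝕜} {A' : Matrix m n 𝕜} {t : 𝕜} :
    HasDerivAt A A' t ↔ ∀ i j, HasDerivAt (fun s => A s i j) (A' i j) t :=
  hasDerivAt_iff_tendsto_slope.trans <| tendsto_pi_nhds.trans <| forall_congr' fun _ =>
    tendsto_pi_nhds.trans <| forall_congr' fun _ => hasDerivAt_iff_tendsto_slope.symm

theorem HasDerivAt.matrix_transpose {A : 𝕜 → Matrix m n 𝕜} {A' : Matrix m n 𝕜} {t : 𝕜}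
    (hA : HasDerivAt A A' t) : HasDerivAt (fun s => (A s)ᵀ) A'ᵀ t :=
  hasDerivAt_matrix_iff.mpr fun i j => hasDerivAt_matrix_iff.mp hA j i

theorem HasDerivAt.matrix_inv [DecidableEq n] {A : 𝕜 → Matrix n n 𝕜} {A' : Matrix n n 𝕜} {t : 𝕜}
    (hA : HasDerivAt A A' t) (hA_unit : IsUnit (A t)) :
    HasDerivAt (fun s => (A s)⁻¹) (-((A t)⁻¹ * A' * (A t)⁻¹)) t := by
  obtain ⟨u, hu⟩ := hA_unit
  have := (hasFDerivAt_ringInverse (𝕜 := 𝕜) u).comp_hasDerivAt_of_eq t hA hu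
  simp only [nonsing_inv_eq_ringInverse, ← hu, Ring.inverse_unit]
  exact this

theorem hasDerivAt_riccati_solution [DecidableEq n] {Ψ V ψ : 𝕜 → Matrix n n 𝕜}
    {S ϑ H : Matrix n n 𝕜} {t : 𝕜}
    (hΨ : HasDerivAt Ψ (-(Hᵀ * Ψ t)) t) (hV : HasDerivAt V (-((Ψ t)ᵀ * Sᵀ * S * Ψ t)) t)
    (hunit : IsUnit (1 + (2 : 𝕜) • (V t * ϑ)))
    (hψ : ∀ s, ψ s = Ψ s * ϑ * (1 + (2 : 𝕜) • (V s * ϑ))⁻¹ * (Ψ s)ᵀ) :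
    HasDerivAt ψ ((2 : 𝕜) • (ψ t * Sᵀ * S * ψ t) - Hᵀ * ψ t - ψ t * H) t := by
  have hN := (((hV.mul_const ϑ).fun_const_smul (2 : 𝕜)).const_add 1).matrix_inv hunit
  rw [funext hψ]
  refine (((hΨ.mul_const ϑ).fun_mul hN).fun_mul hΨ.matrix_transpose).congr_deriv ?_
  simp only [transpose_neg, transpose_mul, transpose_transpose, add_mul, neg_mul, mul_neg,
    smul_mul_assoc, mul_smul_comm, Matrix.mul_assoc, smul_neg, neg_neg, sub_eq_add_neg]
  abel

end

theorem wishart_matrix_riccati_solution_general (d : ℕ) (T : ℝ)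
    (S ϑ : Matrix (Fin d) (Fin d) ℝ)
    (H : ℝ → Matrix (Fin d) (Fin d) ℝ)
    (Ψ V : ℝ → Matrix (Fin d) (Fin d) ℝ)
    (hΨ' : ∀ t ∈ Set.Icc (0 : ℝ) T, ∀ i j : Fin d,
      HasDerivAt (fun s : ℝ => Ψ s i j) ((-((H t)ᵀ * Ψ t)) i j) t)
    (hV' : ∀ t ∈ Set.Icc (0 : ℝ) T, ∀ i j : Fin d,
      HasDerivAt (fun s : ℝ => V s i j) ((-((Ψ t)ᵀ * Sᵀ * S * Ψ t)) i j) t)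
    (hΨT : Ψ T = 1) (hVT : V T = 0)
    (hinv : ∀ t ∈ Set.Icc (0 : ℝ) T, IsUnit (1 + (2 : ℝ) • (V t * ϑ)))
    (ψh : ℝ → Matrix (Fin d) (Fin d) ℝ)
    (hψh : ∀ t : ℝ, ψh t = Ψ t * ϑ * (1 + (2 : ℝ) • (V t * ϑ))⁻¹ * (Ψ t)ᵀ) :
    ψh T = ϑ ∧
      ∀ t ∈ Set.Icc (0 : ℝ) T, ∀ i j : Fin d,
        HasDerivAt (fun s : ℝ => ψh s i j)
          (((2 : ℝ) • (ψh t * Sᵀ * S * ψh t) - (H t)ᵀ * ψh t - ψh t * H t) i j) t := by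
  refine ⟨by simp [hψh, hΨT, hVT], fun t ht => hasDerivAt_matrix_iff.mp ?_⟩
  exact hasDerivAt_riccati_solution (hasDerivAt_matrix_iff.mpr (hΨ' t ht))
    (hasDerivAt_matrix_iff.mpr (hV' t ht)) (hinv t ht) hψh

theorem wishart_matrix_riccati_solution (d : ℕ) (hd : 1 ≤ d) (T : ℝ) (hT : 0 < T)
    (S ϑ : Matrix (Fin d) (Fin d) ℝ)
    (H : ℝ → Matrix (Fin d) (Fin d) ℝ)
    (hH : ∀ i j : Fin d, ContinuousOn (fun t : ℝ => H t i j) (Set.Icc 0 T))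
    (Ψ V : ℝ → Matrix (Fin d) (Fin d) ℝ)
    (hΨ' : ∀ t ∈ Set.Icc (0 : ℝ) T, ∀ i j : Fin d,
      HasDerivAt (fun s : ℝ => Ψ s i j) ((-((H t)ᵀ * Ψ t)) i j) t)
    (hV' : ∀ t ∈ Set.Icc (0 : ℝ) T, ∀ i j : Fin d,
      HasDerivAt (fun s : ℝ => V s i j) ((-((Ψ t)ᵀ * Sᵀ * S * Ψ t)) i j) t)
    (hΨT : Ψ T = 1) (hVT : V T = 0)
    (hinv : ∀ t ∈ Set.Icc (0 : ℝ) T, IsUnit (1 + (2 : ℝ) • (V t * ϑ)))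
    (ψh : ℝ → Matrix (Fin d) (Fin d) ℝ)
    (hψh : ∀ t : ℝ, ψh t = Ψ t * ϑ * (1 + (2 : ℝ) • (V t * ϑ))⁻¹ * (Ψ t)ᵀ) :
    ψh T = ϑ ∧
      ∀ t ∈ Set.Icc (0 : ℝ) T, ∀ i j : Fin d,
        HasDerivAt (fun s : ℝ => ψh s i j)
          (((2 : ℝ) • (ψh t * Sᵀ * S * ψh t) - (H t)ᵀ * ψh t - ψh t * H t) i j) t :=
  wishart_matrix_riccati_solution_general d T S ϑ H Ψ V hΨ' hV' hΨT hVT hinv ψh hψh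
end

section
/- Let d ≥ 1, T > 0, δ ∈ ℝ, Σ ∈ M_d(ℝ), ϑ ∈ M_d(ℝ), and let H : [0, T] → M_d(ℝ) be continuous. Let Ψ, V : [0, T] → M_d(ℝ) be differentiable with Ψ′(t) = −H(t)ᵀ Ψ(t), V′(t) = −Ψ(t)ᵀ Σᵀ Σ Ψ(t) for all t ∈ [0, T], Ψ(T) = I_d, and V(T) = 0. Suppose that det(I_d + 2ϑV(t)) > 0 for every t ∈ [0, T], and set ψ̂(t) = Ψ(t) ϑ (I_d + 2V(t)ϑ)^{−1} Ψ(t)ᵀ. Then the function φ̂(t) = (δ/2) log det(I_d + 2ϑV(t)) satisfies φ̂(T) = 0 and, for every t ∈ [0, T], φ̂ is differentiable at t with φ̂′(t) = −δ tr(ψ̂(t) Σᵀ Σ). -/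
/-!
By Jacobi's formula, the derivative of `log det (1 + 2ϑV)` is `tr ((1 + 2ϑV)⁻¹ 2ϑV')`.
Substituting `V' = -Ψᵀ Sᵀ S Ψ`, the push-through identity `(1 + 2ϑV)⁻¹ ϑ = ϑ (1 + 2Vϑ)⁻¹` and
cyclicity of the trace turn this into `-2 tr (ψ̂ Sᵀ S)`.
-/

open Matrix

namespace Matrix

variable {m n α : Type*} [Fintype m] [Fintype n] [DecidableEq m] [DecidableEq n] [CommRing α]

/-- No invertibility is needed: by `det_one_add_mul_comm`, either both inverses are genuine or
both are the junk value `0`. -/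
theorem inv_one_add_mul_mul_self (A : Matrix m n α) (B : Matrix n m α) :
    (1 + A * B)⁻¹ * A = A * (1 + B * A)⁻¹ := by
  by_cases h : IsUnit (1 + A * B).det
  · have h' : IsUnit (1 + B * A).det := det_one_add_mul_comm A B ▸ h
    have hcomm : (1 + A * B) * A = A * (1 + B * A) := by
      simp only [Matrix.add_mul, Matrix.mul_add, Matrix.one_mul, Matrix.mul_one, Matrix.mul_assoc]
    calc (1 + A * B)⁻¹ * A = (1 + A * B)⁻¹ * ((1 + A * B) * A) * (1 + B * A)⁻¹ := by
          rw [hcomm, Matrix.mul_assoc, Matrix.mul_assoc, mul_nonsing_inv _ h', Matrix.mul_one]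
      _ = A * (1 + B * A)⁻¹ := by
          rw [← Matrix.mul_assoc, nonsing_inv_mul _ h, Matrix.one_mul]
  · have h' : ¬IsUnit (1 + B * A).det := det_one_add_mul_comm A B ▸ h
    rw [nonsing_inv_apply_not_isUnit _ h, nonsing_inv_apply_not_isUnit _ h',
      Matrix.zero_mul, Matrix.mul_zero]

theorem trace_adjugate_mul (A B : Matrix n n α) :
    (adjugate A * B).trace = ∑ i, (A.updateCol i fun k => B k i).det := by
  refine Finset.sum_congr rfl fun i _ => ?_
  rw [← cramer_apply, cramer_eq_adjugate_mulVec]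
  rfl

theorem trace_adjugate_mul_eq_det_mul_trace_inv_mul (A B : Matrix n n α) (h : IsUnit A.det) :
    (adjugate A * B).trace = A.det * (A⁻¹ * B).trace := by
  have hadj : adjugate A = A.det • A⁻¹ := by
    rw [← Matrix.one_mul (adjugate A), ← nonsing_inv_mul A h, Matrix.mul_assoc, mul_adjugate,
      Matrix.mul_smul, Matrix.mul_one]
  rw [hadj, Matrix.smul_mul, trace_smul, smul_eq_mul]

theorem det_updateCol_eq_sum_perm (A B : Matrix n n α) (i : n) :
    (A.updateCol i fun k => B k i).det =
      ∑ σ : Equiv.Perm n, (Equiv.Perm.sign σ : α) *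
        ((∏ j ∈ Finset.univ.erase i, A (σ j) j) * B (σ i) i) := by
  rw [det_apply']
  refine Finset.sum_congr rfl fun σ _ => ?_
  rw [← Finset.prod_erase_mul _ _ (Finset.mem_univ i), updateCol_self]
  congr 2
  exact Finset.prod_congr rfl fun j hj => updateCol_ne (Finset.ne_of_mem_erase hj)

end Matrix

section Deriv

variable {n 𝕜 : Type*} [Fintype n] [DecidableEq n] [NontriviallyNormedField 𝕜]

theorem hasDerivAt_det {A : 𝕜 → Matrix n n 𝕜} {A' : Matrix n n 𝕜} {t : 𝕜}
    (hA : ∀ i j, HasDerivAt (fun s => A s i j) (A' i j) t) :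
    HasDerivAt (fun s => (A s).det) (adjugate (A t) * A').trace t := by
  simp_rw [det_apply']
  refine (HasDerivAt.fun_sum fun σ _ =>
    (HasDerivAt.fun_finsetProd fun i _ => hA (σ i) i).const_mul _).congr_deriv ?_
  simp only [trace_adjugate_mul, det_updateCol_eq_sum_perm, smul_eq_mul, Finset.mul_sum]
  exact Finset.sum_comm

theorem hasDerivAt_log_det {A : ℝ → Matrix n n ℝ} {A' : Matrix n n ℝ} {t : ℝ}
    (hA : ∀ i j, HasDerivAt (fun s => A s i j) (A' i j) t) (hdet : (A t).det ≠ 0) :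
    HasDerivAt (fun s => Real.log (A s).det) ((A t)⁻¹ * A').trace t := by
  convert (hasDerivAt_det hA).log hdet using 1
  rw [trace_adjugate_mul_eq_det_mul_trace_inv_mul _ _ (isUnit_iff_ne_zero.mpr hdet)]
  field_simp

theorem hasDerivAt_one_add_smul_mul_apply {V : 𝕜 → Matrix n n 𝕜} {V' : Matrix n n 𝕜} {t : 𝕜}
    (c : 𝕜) (M : Matrix n n 𝕜) (hV : ∀ i j, HasDerivAt (fun s => V s i j) (V' i j) t)
    (i j : n) : HasDerivAt (fun s => (1 + c • (M * V s)) i j) ((c • (M * V')) i j) t := by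
  simp only [Matrix.add_apply, Matrix.smul_apply, mul_apply, smul_eq_mul]
  simpa using ((HasDerivAt.fun_sum fun k _ => (hV k j).const_mul (M i k)).const_mul c).const_add
    ((1 : Matrix n n 𝕜) i j)

end Deriv

theorem wishart_logdet_solution_general (d : ℕ) (T : ℝ)
    (δ : ℝ) (S ϑ : Matrix (Fin d) (Fin d) ℝ)
    (Ψ V : ℝ → Matrix (Fin d) (Fin d) ℝ)
    (hV' : ∀ t ∈ Set.Icc (0 : ℝ) T, ∀ i j : Fin d,
      HasDerivAt (fun s : ℝ => V s i j) ((-((Ψ t)ᵀ * Sᵀ * S * Ψ t)) i j) t)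
    (hVT : V T = 0)
    (hdet : ∀ t ∈ Set.Icc (0 : ℝ) T, 0 < (1 + (2 : ℝ) • (ϑ * V t)).det)
    (ψh : ℝ → Matrix (Fin d) (Fin d) ℝ)
    (hψh : ∀ t : ℝ, ψh t = Ψ t * ϑ * (1 + (2 : ℝ) • (V t * ϑ))⁻¹ * (Ψ t)ᵀ)
    (φh : ℝ → ℝ)
    (hφh : ∀ t : ℝ, φh t = δ / 2 * Real.log (1 + (2 : ℝ) • (ϑ * V t)).det) :
    φh T = 0 ∧
      ∀ t ∈ Set.Icc (0 : ℝ) T,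
        HasDerivAt φh (-δ * Matrix.trace (ψh t * Sᵀ * S)) t := by
  rw [show φh = _ from funext hφh]
  refine ⟨by simp [hVT], fun t ht => ?_⟩
  have hlog := hasDerivAt_log_det (hasDerivAt_one_add_smul_mul_apply 2 ϑ (hV' t ht))
    (hdet t ht).ne'
  refine (hlog.const_mul (δ / 2)).congr_deriv ?_
  have hpush : (1 + (2 : ℝ) • (ϑ * V t))⁻¹ * ϑ = ϑ * (1 + (2 : ℝ) • (V t * ϑ))⁻¹ := by
    simpa only [mul_smul_comm, smul_mul_assoc] using inv_one_add_mul_mul_self ϑ ((2 : ℝ) • V t)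
  calc δ / 2 * ((1 + (2 : ℝ) • (ϑ * V t))⁻¹ * ((2 : ℝ) • (ϑ * -((Ψ t)ᵀ * Sᵀ * S * Ψ t)))).trace
      = -δ * ((1 + (2 : ℝ) • (ϑ * V t))⁻¹ * ϑ * ((Ψ t)ᵀ * Sᵀ * S * Ψ t)).trace := by
        rw [Matrix.mul_smul, Matrix.mul_neg, Matrix.mul_neg, trace_smul, trace_neg,
          ← Matrix.mul_assoc]
        simp only [smul_eq_mul]
        ring
    _ = -δ * (ψh t * Sᵀ * S).trace := by
        rw [hpush, hψh]
        simp only [Matrix.mul_assoc]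
        rw [trace_mul_comm (Ψ t)]
        simp only [Matrix.mul_assoc]

theorem wishart_logdet_solution (d : ℕ) (hd : 1 ≤ d) (T : ℝ) (hT : 0 < T)
    (δ : ℝ) (S ϑ : Matrix (Fin d) (Fin d) ℝ)
    (H : ℝ → Matrix (Fin d) (Fin d) ℝ)
    (hH : ∀ i j : Fin d, ContinuousOn (fun t : ℝ => H t i j) (Set.Icc 0 T))
    (Ψ V : ℝ → Matrix (Fin d) (Fin d) ℝ)
    (hΨ' : ∀ t ∈ Set.Icc (0 : ℝ) T, ∀ i j : Fin d,
      HasDerivAt (fun s : ℝ => Ψ s i j) ((-((H t)ᵀ * Ψ t)) i j) t)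
    (hV' : ∀ t ∈ Set.Icc (0 : ℝ) T, ∀ i j : Fin d,
      HasDerivAt (fun s : ℝ => V s i j) ((-((Ψ t)ᵀ * Sᵀ * S * Ψ t)) i j) t)
    (hΨT : Ψ T = 1) (hVT : V T = 0)
    (hdet : ∀ t ∈ Set.Icc (0 : ℝ) T, 0 < (1 + (2 : ℝ) • (ϑ * V t)).det)
    (ψh : ℝ → Matrix (Fin d) (Fin d) ℝ)
    (hψh : ∀ t : ℝ, ψh t = Ψ t * ϑ * (1 + (2 : ℝ) • (V t * ϑ))⁻¹ * (Ψ t)ᵀ)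
    (φh : ℝ → ℝ)
    (hφh : ∀ t : ℝ, φh t = δ / 2 * Real.log (1 + (2 : ℝ) • (ϑ * V t)).det) :
    φh T = 0 ∧
      ∀ t ∈ Set.Icc (0 : ℝ) T,
        HasDerivAt φh (-δ * Matrix.trace (ψh t * Sᵀ * S)) t :=
  wishart_logdet_solution_general d T δ S ϑ Ψ V hV' hVT hdet ψh hψh φh hφh
end
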